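/- Let L1, L2 and M be probabilistic languages over Σ with L1 ⊆ M and L2 ⊆ M. If L1 and L2 are both probabilistic observable w.r.t. M, Σc and Σo, then L1 ∩ L2 is probabilistic observable w.r.t. M, Σc and Σo. -/

import Mathlib

open scoped BigOperators

noncomputable section

/-- Chain product: given step weights `w s σ` (interpreted as the conditional
probability of event `σ` after string `s`), `chainProd w pre rest` multiplies the
weights along `rest`, starting from the already-consumed prefix `pre`. -/
def chainProd {E : Type*} (w : List E → E → ℝ) : List E → List E → ℝ
  | _, [] => 1
  | pre, σ :: rest => w pre σ * chainProd w (pre ++ [σ]) rest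

/-- The (probabilistic) language generated by step weights `w`:
`langOf w [] = 1` and `langOf w (s ++ [σ]) = langOf w s * w s σ`. -/
def langOf {E : Type*} (w : List E → E → ℝ) : List E → ℝ := chainProd w []

/-- A probabilistic language over a finite event set `E`. -/
structure PLang (E : Type*) [Fintype E] where
  toFun : List E → ℝ
  nonneg : ∀ s, 0 ≤ toFun s
  le_one : ∀ s, toFun s ≤ 1
  eps : toFun [] = 1
  step : ∀ s, (∑ σ : E, toFun (s ++ [σ])) ≤ toFun s

/-- `L1` is a probabilistic sublanguage of `L2`. -/
def PSub {E : Type*} (L1 L2 : List E → ℝ) : Prop :=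
  (∀ s, 0 < L1 s → 0 < L2 s) ∧
  ∀ s, 0 < L1 s → ∀ σ : E, L1 (s ++ [σ]) / L1 s ≤ L2 (s ++ [σ]) / L2 s

/-- Intersection of probabilistic languages. -/
def pInter {E : Type*} (L1 L2 : List E → ℝ) : List E → ℝ :=
  langOf fun s σ => min (L1 (s ++ [σ]) / L1 s) (L2 (s ++ [σ]) / L2 s)

/-- Natural projection erasing the events outside the observable set `So`. -/
def proj {E : Type*} [DecidableEq E] (So : Finset E) (s : List E) : List E :=
  s.filter fun σ => decide (σ ∈ So)

/-- A probabilistic discrete event system (probabilistic automaton). -/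
structure PDES (X : Type*) (E : Type*) [Fintype E] where
  x0 : X
  trans : X → E → Option X
  prob : X → E → ℝ
  prob_nonneg : ∀ x σ, 0 ≤ prob x σ
  prob_le_one : ∀ x σ, prob x σ ≤ 1
  prob_pos_iff : ∀ x σ, 0 < prob x σ ↔ (trans x σ).isSome
  sum_le_one : ∀ x, (∑ σ : E, prob x σ) ≤ 1

/-- Extension of the partial transition function to strings. -/
def PDES.transStar {X E : Type*} [Fintype E] (G : PDES X E) (s : List E) : Option X :=
  s.foldl (fun ox σ => ox.bind fun x => G.trans x σ) (some G.x0)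

/-- Step weight of a PDES: `ρ(δ(x0,s),σ)` when `δ(x0,s)` is defined, `0` otherwise. -/
def PDES.w {X E : Type*} [Fintype E] (G : PDES X E) (s : List E) (σ : E) : ℝ :=
  (G.transStar s).elim 0 fun x => G.prob x σ

/-- The probabilistic language generated by a PDES. -/
def PDES.lang {X E : Type*} [Fintype E] (G : PDES X E) : List E → ℝ := langOf G.w

/-- The set of control patterns: subsets of events containing every uncontrollable event. -/
def ControlPatterns {E : Type*} [Fintype E] [DecidableEq E] (Sc : Finset E) :
    Finset (Finset E) :=
  Finset.univ.filter fun θ => Scᶜ ⊆ θ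

/-- `Sp` is a probabilistic P-supervisor for `G`: to every observation of a string in the
support of `L_G` it assigns a probability distribution on the control patterns. -/
def IsSupervisor {X E : Type*} [Fintype E] [DecidableEq E] (G : PDES X E)
    (Sc So : Finset E) (Sp : List E → Finset E → ℝ) : Prop :=
  ∀ s : List E, 0 < G.lang s →
    (∀ θ ∈ ControlPatterns Sc, 0 ≤ Sp (proj So s) θ) ∧
    (∑ θ ∈ ControlPatterns Sc, Sp (proj So s) θ) = 1

/-- The controlled probabilistic language `L_{Sp/G}`. -/
def supLang {X E : Type*} [Fintype E] [DecidableEq E] (G : PDES X E)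
    (Sc So : Finset E) (Sp : List E → Finset E → ℝ) : List E → ℝ :=
  langOf fun s σ =>
    G.w s σ * ∑ θ ∈ (ControlPatterns Sc).filter (fun θ => σ ∈ θ), Sp (proj So s) θ

/-- `K` is a scaling-factor function for `G`: on every observation of a string in the
support of `L_G` it takes values in `[0,1]` and equals `1` on uncontrollable events. -/
def IsScaling {X E : Type*} [Fintype E] [DecidableEq E] (G : PDES X E)
    (Sc So : Finset E) (K : List E → E → ℝ) : Prop :=
  ∀ s : List E, 0 < G.lang s → ∀ σ : E,
    0 ≤ K (proj So s) σ ∧ K (proj So s) σ ≤ 1 ∧ (σ ∉ Sc → K (proj So s) σ = 1)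

/-- The controlled probabilistic language `L_{K/G}`. -/
def kLang {X E : Type*} [Fintype E] [DecidableEq E] (G : PDES X E)
    (So : Finset E) (K : List E → E → ℝ) : List E → ℝ :=
  langOf fun s σ => G.w s σ * K (proj So s) σ

/-- Probabilistic controllability (language form). -/
def ProbControllable {E : Type*} (L M : List E → ℝ) (Sc : Finset E) : Prop :=
  ∀ s : List E, 0 < L s → ∀ σ : E, σ ∉ Sc →
    L (s ++ [σ]) / L s = M (s ++ [σ]) / M s

/-- Probabilistic observability (language form). -/
def ProbObservable {E : Type*} [DecidableEq E] (L M : List E → ℝ)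
    (Sc So : Finset E) : Prop :=
  ∀ s1 s2 : List E, 0 < L s1 → 0 < L s2 → proj So s1 = proj So s2 →
    ∀ σ ∈ Sc,
      (M (s1 ++ [σ]) / M s1) * (L (s2 ++ [σ]) / L s2) =
      (M (s2 ++ [σ]) / M s2) * (L (s1 ++ [σ]) / L s1)

/-- Probabilistic controllability (automata form). -/
def AutControllable {X Q E : Type*} [Fintype E] (G : PDES X E) (H : PDES Q E)
    (Sc : Finset E) : Prop :=
  ∀ s : List E, 0 < H.lang s → ∀ x q,
    G.transStar s = some x → H.transStar s = some q →
    ∀ σ : E, σ ∉ Sc → H.prob q σ = G.prob x σ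

/-- Probabilistic observability (automata form). -/
def AutObservable {X Q E : Type*} [Fintype E] [DecidableEq E] (G : PDES X E)
    (H : PDES Q E) (Sc So : Finset E) : Prop :=
  ∀ s1 s2 : List E, 0 < H.lang s1 → 0 < H.lang s2 → proj So s1 = proj So s2 →
    ∀ x1 q1 x2 q2,
      G.transStar s1 = some x1 → H.transStar s1 = some q1 →
      G.transStar s2 = some x2 → H.transStar s2 = some q2 →
      ∀ σ ∈ Sc, G.prob x1 σ * H.prob q2 σ = G.prob x2 σ * H.prob q1 σ

/-- Reachability in the controllability-testing automaton `G_tc`.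
States are pairs `(x,q)` (as `Sum.inl`) together with the special state `d` (`Sum.inr ()`). -/
inductive TcReach {X Q E : Type*} [Fintype E] (G : PDES X E) (H : PDES Q E)
    (Sc : Finset E) : (X × Q) ⊕ Unit → Prop
  | init : TcReach G H Sc (Sum.inl (G.x0, H.x0))
  | good (x q x' q' σ) : TcReach G H Sc (Sum.inl (x, q)) →
      G.trans x σ = some x' → H.trans q σ = some q' →
      ((σ ∉ Sc ∧ G.prob x σ = H.prob q σ) ∨ σ ∈ Sc) →
      TcReach G H Sc (Sum.inl (x', q'))
  | bad (x q σ) : TcReach G H Sc (Sum.inl (x, q)) →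
      σ ∉ Sc → G.prob x σ ≠ H.prob q σ →
      TcReach G H Sc (Sum.inr ())

/-- Reachability in the observability-testing automaton `G_to`.
States are 4-tuples `(x1,q1,x2,q2)` (as `Sum.inl`) together with the special state `d`. -/
inductive ToReach {X Q E : Type*} [Fintype E] (G : PDES X E) (H : PDES Q E)
    (Sc So : Finset E) : (X × Q × X × Q) ⊕ Unit → Prop
  | init : ToReach G H Sc So (Sum.inl (G.x0, H.x0, G.x0, H.x0))
  | sync (x1 q1 x2 q2 x1' q1' x2' q2' σ) :
      ToReach G H Sc So (Sum.inl (x1, q1, x2, q2)) →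
      G.trans x1 σ = some x1' → H.trans q1 σ = some q1' →
      G.trans x2 σ = some x2' → H.trans q2 σ = some q2' →
      (σ ∉ Sc ∨ (σ ∈ Sc ∧ G.prob x1 σ * H.prob q2 σ = G.prob x2 σ * H.prob q1 σ)) →
      ToReach G H Sc So (Sum.inl (x1', q1', x2', q2'))
  | bad (x1 q1 x2 q2 σ) :
      ToReach G H Sc So (Sum.inl (x1, q1, x2, q2)) →
      σ ∈ Sc → G.prob x1 σ * H.prob q2 σ ≠ G.prob x2 σ * H.prob q1 σ →
      ToReach G H Sc So (Sum.inr ())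
  | left (x1 q1 x2 q2 x1' q1' σ) :
      ToReach G H Sc So (Sum.inl (x1, q1, x2, q2)) → σ ∉ So →
      G.trans x1 σ = some x1' → H.trans q1 σ = some q1' →
      ToReach G H Sc So (Sum.inl (x1', q1', x2, q2))
  | right (x1 q1 x2 q2 x2' q2' σ) :
      ToReach G H Sc So (Sum.inl (x1, q1, x2, q2)) → σ ∉ So →
      G.trans x2 σ = some x2' → H.trans q2 σ = some q2' →
      ToReach G H Sc So (Sum.inl (x1, q1, x2', q2'))

/-- `H` is a probabilistic subautomaton of `G`, as witnessed by the state inclusion `e`. -/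
def SubautomatonVia {Q X E : Type*} [Fintype E] (H : PDES Q E) (G : PDES X E)
    (e : Q → X) : Prop :=
  Function.Injective e ∧ e H.x0 = G.x0 ∧
  ∀ q σ, H.prob q σ ≤ G.prob (e q) σ ∧
    ∀ q', H.trans q σ = some q' → G.trans (e q) σ = some (e q')

/-- The product of two PDESs. -/
def PDES.prod {X Q E : Type*} [Fintype E] (G : PDES X E) (H : PDES Q E) :
    PDES (X × Q) E where
  x0 := (G.x0, H.x0)
  trans := fun p σ => (G.trans p.1 σ).bind fun x => (H.trans p.2 σ).map fun q => (x, q)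
  prob := fun p σ => min (G.prob p.1 σ) (H.prob p.2 σ)
  prob_nonneg := fun p σ => le_min (G.prob_nonneg _ _) (H.prob_nonneg _ _)
  prob_le_one := fun p σ => le_trans (min_le_left _ _) (G.prob_le_one _ _)
  prob_pos_iff := by
    intro p σ
    rw [lt_min_iff, G.prob_pos_iff, H.prob_pos_iff]
    cases hG : G.trans p.1 σ <;> cases hH : H.trans p.2 σ <;> simp [hG, hH]
  sum_le_one := fun p =>
    le_trans (Finset.sum_le_sum fun σ _ => min_le_left _ _) (G.sum_le_one p.1)

end

/-! The conditional probabilities of `L1 ∩ L2` are the pointwise minima of those of `L1` and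
`L2`. Multiplying by the nonnegative conditional probability of `M` commutes with `min`, so the
observability identities of `L1` and `L2` combine termwise into the one for `L1 ∩ L2`. -/

section langOf

variable {E : Type*} (w : List E → E → ℝ)

lemma chainProd_append_singleton (pre rest : List E) (σ : E) :
    chainProd w pre (rest ++ [σ]) = chainProd w pre rest * w (pre ++ rest) σ := by
  induction rest generalizing pre with
  | nil => simp [chainProd]
  | cons τ rest ih => simp [chainProd, ih, mul_assoc]

lemma langOf_append_singleton (s : List E) (σ : E) :
    langOf w (s ++ [σ]) = langOf w s * w s σ := by
  simpa [langOf] using chainProd_append_singleton w [] s σ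

lemma langOf_append_singleton_div {s : List E} (hs : langOf w s ≠ 0) (σ : E) :
    langOf w (s ++ [σ]) / langOf w s = w s σ := by
  rw [langOf_append_singleton, mul_div_cancel_left₀ _ hs]

variable {w}

lemma langOf_nonneg (hw : ∀ s σ, 0 ≤ w s σ) (s : List E) : 0 ≤ langOf w s := by
  induction s using List.reverseRecOn with
  | nil => simp [langOf, chainProd]
  | append_singleton s σ ih => rw [langOf_append_singleton]; exact mul_nonneg ih (hw s σ)

lemma pos_of_langOf_append_singleton_pos (hw : ∀ s σ, 0 ≤ w s σ) {s : List E} {σ : E}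
    (h : 0 < langOf w (s ++ [σ])) : 0 < langOf w s ∧ 0 < w s σ := by
  rw [langOf_append_singleton] at h
  exact ⟨(langOf_nonneg hw s).lt_of_ne' (left_ne_zero_of_mul h.ne'),
    (hw s σ).lt_of_ne' (right_ne_zero_of_mul h.ne')⟩

end langOf

section pInter

variable {E : Type*} {L1 L2 : List E → ℝ}

lemma pInter_append_singleton_div {s : List E} (hs : 0 < pInter L1 L2 s) (σ : E) :
    pInter L1 L2 (s ++ [σ]) / pInter L1 L2 s =
      min (L1 (s ++ [σ]) / L1 s) (L2 (s ++ [σ]) / L2 s) :=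
  langOf_append_singleton_div _ hs.ne' σ

lemma pos_of_pInter_pos (hL1 : 0 < L1 []) (hL2 : 0 < L2 [])
    (hn1 : ∀ s, 0 ≤ L1 s) (hn2 : ∀ s, 0 ≤ L2 s) {s : List E} (hs : 0 < pInter L1 L2 s) :
    0 < L1 s ∧ 0 < L2 s := by
  induction s using List.reverseRecOn with
  | nil => exact ⟨hL1, hL2⟩
  | append_singleton s σ _ =>
    have hw : ∀ s σ, 0 ≤ min (L1 (s ++ [σ]) / L1 s) (L2 (s ++ [σ]) / L2 s) := fun s σ =>
      le_min (div_nonneg (hn1 _) (hn1 _)) (div_nonneg (hn2 _) (hn2 _))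
    obtain ⟨hr1, hr2⟩ := lt_min_iff.mp (pos_of_langOf_append_singleton_pos hw hs).2
    exact ⟨(hn1 _).lt_of_ne' (div_ne_zero_iff.mp hr1.ne').1,
      (hn2 _).lt_of_ne' (div_ne_zero_iff.mp hr2.ne').1⟩

end pInter

theorem pInter_probObservable_general {E : Type*} [Fintype E] [DecidableEq E]
    (L1 L2 M : PLang E) (Sc So : Finset E)
    (ho1 : ProbObservable L1.toFun M.toFun Sc So)
    (ho2 : ProbObservable L2.toFun M.toFun Sc So) :
    ProbObservable (pInter L1.toFun L2.toFun) M.toFun Sc So := by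
  intro s1 s2 hs1 hs2 hproj σ hσ
  have hsupp {s} (hs : 0 < pInter L1.toFun L2.toFun s) :=
    pos_of_pInter_pos (L1.eps ▸ one_pos) (L2.eps ▸ one_pos) L1.nonneg L2.nonneg hs
  obtain ⟨h11, h12⟩ := hsupp hs1
  obtain ⟨h21, h22⟩ := hsupp hs2
  have hM (s : List E) : 0 ≤ M.toFun (s ++ [σ]) / M.toFun s :=
    div_nonneg (M.nonneg _) (M.nonneg _)
  rw [pInter_append_singleton_div hs1, pInter_append_singleton_div hs2,
    mul_min_of_nonneg _ _ (hM s1), mul_min_of_nonneg _ _ (hM s2),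
    ho1 s1 s2 h11 h21 hproj σ hσ, ho2 s1 s2 h12 h22 hproj σ hσ]

/-- probabilistic observability is closed under intersection. -/
theorem pInter_probObservable {E : Type*} [Fintype E] [DecidableEq E]
    (L1 L2 M : PLang E) (Sc So : Finset E)
    (h1 : PSub L1.toFun M.toFun) (h2 : PSub L2.toFun M.toFun)
    (ho1 : ProbObservable L1.toFun M.toFun Sc So)
    (ho2 : ProbObservable L2.toFun M.toFun Sc So) :
    ProbObservable (pInter L1.toFun L2.toFun) M.toFun Sc So :=
  pInter_probObservable_general L1 L2 M Sc So ho1 ho2
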